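/- arXiv:1802.04242 — 3 statements merged into one kernel-verified Lean document; each statement's English description precedes it below -/
import Mathlib

section
/- For integers 2 ≤ ℓ < k, every ℓ-path k-graph P of length m ≥ 1 is strictly balanced: every proper subgraph P' of P with at least one edge satisfies d(P') < d(P), where d(H) = e(H)/(v(H)-1). -/
/-- The edges of an `ℓ`-path `k`-graph of length `m` with vertex sequence `v`. -/
def pathEdges {α : Type*} [DecidableEq α] (k ℓ m : ℕ) (v : ℕ → α) :
    Finset (Finset α) :=
  (Finset.range m).image (fun r => (Finset.range k).image (fun i => v (r * (k - ℓ) + i)))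

/-- `(V, E)` is an `ℓ`-path `k`-graph of length `m`. -/
def IsEllPath {α : Type*} [DecidableEq α] (k ℓ m : ℕ) (V : Finset α)
    (E : Finset (Finset α)) : Prop :=
  ∃ v : ℕ → α, Set.InjOn v (Finset.range (m * (k - ℓ) + ℓ)) ∧
    V = (Finset.range (m * (k - ℓ) + ℓ)).image v ∧ E = pathEdges k ℓ m v

open Finset

/-- For `2 ≤ ℓ < k`, every `ℓ`-path `k`-graph `P` of length `m ≥ 1` is strictly
balanced: every proper subgraph `P' = (V', E')` of `P` with at least one edge
satisfies `d(P') < d(P)`, where `d(H) = e(H)/(v(H)-1)`. -/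
theorem ellPath_strictly_balanced {α : Type*} [DecidableEq α] (k ℓ m : ℕ)
    (hℓ : 2 ≤ ℓ) (hℓk : ℓ < k) (hm : 1 ≤ m)
    (V : Finset α) (E : Finset (Finset α)) (h : IsEllPath k ℓ m V E)
    (V' : Finset α) (E' : Finset (Finset α))
    (hV' : V' ⊆ V) (hE' : E' ⊆ E) (hcover : ∀ e ∈ E', e ⊆ V')
    (hproper : V' ≠ V ∨ E' ≠ E) (hne : E'.Nonempty) :
    (E'.card : ℝ) / ((V'.card : ℝ) - 1) < (E.card : ℝ) / ((V.card : ℝ) - 1) := by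
  obtain ⟨v, hinj, hV, hE⟩ := h
  set c := k - ℓ with hc
  have hc1 : 1 ≤ c := by omega
  have hk : k = c + ℓ := by omega
  set f : ℕ → Finset α := fun r => (Finset.range k).image (fun i => v (r * c + i)) with hf
  have hEeq : E = (Finset.range m).image f := hE
  -- edges as images of intervals of indices
  have hfIco : ∀ r, f r = (Finset.Ico (r * c) (r * c + k)).image v := by
    intro r
    ext a
    simp only [hf, mem_image, mem_range, mem_Ico]
    constructor
    · rintro ⟨i, hi, rfl⟩; exact ⟨r * c + i, by omega, rfl⟩
    · rintro ⟨j, hj, rfl⟩; exact ⟨j - r * c, by omega, by congr 1; omega⟩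
  have hmulle : ∀ {a b : ℕ}, a ≤ b → a * c ≤ b * c := fun hab =>
    Nat.mul_le_mul_right c hab
  have hsub : ∀ r < m, ∀ x ∈ Finset.Ico (r * c) (r * c + k), x ∈ Finset.range (m * c + ℓ) := by
    intro r hr x hx
    simp only [mem_Ico, mem_range] at *
    have := hmulle (show r + 1 ≤ m by omega)
    have h2 : r * c + c ≤ m * c := by
      calc r * c + c = (r + 1) * c := by ring
        _ ≤ m * c := this
    omega
  have hmemrange : ∀ {x : ℕ}, x ∈ Finset.range (m * c + ℓ) →
      x ∈ (↑(Finset.range (m * (k - ℓ) + ℓ)) : Set ℕ) := by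
    intro x hx
    simpa using (by simpa using hx : x < m * c + ℓ)
  -- injectivity of the edge map
  have fne : ∀ r r', r < r' → r' < m → f r ≠ f r' := by
    intro r r' hrr' hr' heq
    have hmem : v (r' * c + k - 1) ∈ f r' := by
      rw [hfIco]
      exact mem_image_of_mem v (by simp [mem_Ico]; omega)
    rw [← heq, hfIco] at hmem
    obtain ⟨j, hj, hvj⟩ := mem_image.1 hmem
    rw [mem_Ico] at hj
    have h1 : j = r' * c + k - 1 := by
      refine hinj (hmemrange (hsub r (by omega) j (by simp [mem_Ico]; omega)))
        (hmemrange (hsub r' hr' _ (by simp [mem_Ico]; omega))) hvj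
    have h2 : r * c + c ≤ r' * c := by
      calc r * c + c = (r + 1) * c := by ring
        _ ≤ r' * c := hmulle hrr'
    omega
  have finj : Set.InjOn f (Finset.range m : Set ℕ) := by
    intro r hr r' hr' heq
    simp only [coe_range, Set.mem_Iio] at hr hr'
    by_contra hne'
    rcases Nat.lt_or_ge r r' with h1 | h1
    · exact fne r r' h1 hr' heq
    · exact fne r' r (by omega) hr heq.symm
  have hEcard : E.card = m := by
    rw [hEeq, Finset.card_image_of_injOn finj, Finset.card_range]
  have hVcard : V.card = m * c + ℓ := by
    rw [hV, Finset.card_image_of_injOn (by simpa using hinj), Finset.card_range]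
  -- E' as image of an index set S
  set S : Finset ℕ := (Finset.range m).filter (fun r => f r ∈ E') with hS
  have hE'eq : E' = S.image f := by
    ext e
    simp only [hS, mem_image, mem_filter, mem_range]
    constructor
    · intro he
      obtain ⟨r, hr, heq⟩ := mem_image.1 (by rw [hEeq] at hE'; exact hE' he)
      have heq' : f r = e := heq
      have hr' : r ∈ Finset.range m := hr
      exact ⟨r, ⟨by simpa using hr', heq' ▸ he⟩, heq'⟩
    · rintro ⟨r, ⟨_, he⟩, rfl⟩; exact he
  have hSsub : S ⊆ Finset.range m := Finset.filter_subset _ _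
  have hScard : S.card = E'.card := by
    rw [hE'eq, Finset.card_image_of_injOn (finj.mono (by exact_mod_cast hSsub))]
  have hSne : S.Nonempty := by
    rw [hE'eq] at hne; exact Finset.Nonempty.of_image hne
  have hSm : ∀ r ∈ S, r < m := fun r hr => by simpa using hSsub hr
  -- the lower bound on V'.card
  set r₀ := S.min' hSne with hr₀
  have hr₀S : r₀ ∈ S := S.min'_mem hSne
  have hr₀le : ∀ r ∈ S, r₀ ≤ r := fun r hr => S.min'_le r hr
  set W : Finset ℕ := Finset.Ico (r₀ * c) (r₀ * c + ℓ) ∪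
      S.biUnion (fun r => Finset.Ico (r * c + ℓ) (r * c + k)) with hW
  have hdisjtails : ∀ r ∈ S, ∀ r' ∈ S, r ≠ r' →
      Disjoint (Finset.Ico (r * c + ℓ) (r * c + k)) (Finset.Ico (r' * c + ℓ) (r' * c + k)) := by
    intro r _ r' _ hne'
    rw [Finset.disjoint_left]
    intro a ha hb
    rw [mem_Ico] at ha hb
    rcases Nat.lt_or_ge r r' with h1 | h1
    · have : r * c + c ≤ r' * c := by
        calc r * c + c = (r + 1) * c := by ring
          _ ≤ r' * c := hmulle h1
      omega
    · have h1' : r' < r := by omega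
      have : r' * c + c ≤ r * c := by
        calc r' * c + c = (r' + 1) * c := by ring
          _ ≤ r * c := hmulle h1'
      omega
  have hWcard : W.card = ℓ + S.card * c := by
    rw [hW, Finset.card_union_of_disjoint, Finset.card_biUnion hdisjtails]
    · simp only [Nat.card_Ico]
      rw [Finset.sum_congr rfl (fun r _ => show r * c + k - (r * c + ℓ) = c by omega)]
      simp [Finset.sum_const, mul_comm]
    · rw [Finset.disjoint_left]
      intro a ha hb
      rw [mem_Ico] at ha
      obtain ⟨r, hrS, hb⟩ := Finset.mem_biUnion.1 hb
      rw [mem_Ico] at hb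
      have := hmulle (hr₀le r hrS)
      omega
  have hWrange : ∀ x ∈ W, x ∈ Finset.range (m * c + ℓ) := by
    intro x hx
    rcases Finset.mem_union.1 hx with hx | hx
    · rw [mem_Ico] at hx
      exact hsub r₀ (hSm _ hr₀S) x (by simp [mem_Ico]; omega)
    · obtain ⟨r, hrS, hx⟩ := Finset.mem_biUnion.1 hx
      rw [mem_Ico] at hx
      exact hsub r (hSm _ hrS) x (by simp [mem_Ico]; omega)
  have hWsub : W.image v ⊆ V' := by
    intro a ha
    obtain ⟨x, hx, rfl⟩ := mem_image.1 ha
    rcases Finset.mem_union.1 hx with hx | hx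
    · rw [mem_Ico] at hx
      refine hcover (f r₀) ((mem_filter.1 hr₀S).2) ?_
      rw [hfIco]
      exact mem_image_of_mem v (by simp [mem_Ico]; omega)
    · obtain ⟨r, hrS, hx⟩ := Finset.mem_biUnion.1 hx
      rw [mem_Ico] at hx
      refine hcover (f r) ((mem_filter.1 hrS).2) ?_
      rw [hfIco]
      exact mem_image_of_mem v (by simp [mem_Ico]; omega)
  have hV'lb : ℓ + E'.card * c ≤ V'.card := by
    calc ℓ + E'.card * c = W.card := by rw [hWcard, hScard]
      _ = (W.image v).card := (Finset.card_image_of_injOn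
            (hinj.mono (fun x hx => hmemrange (hWrange x hx)))).symm
      _ ≤ V'.card := Finset.card_le_card hWsub
  -- case split on E'.card
  have hE'le : E'.card ≤ m := hEcard ▸ Finset.card_le_card hE'
  have hE'1 : 1 ≤ E'.card := Finset.card_pos.2 hne
  rcases Nat.lt_or_ge E'.card m with hlt | hge
  · -- main arithmetic case
    have hV'le : V'.card ≤ m * c + ℓ := hVcard ▸ Finset.card_le_card hV'
    rw [hEcard, hVcard]
    have hb1 : (1 : ℝ) < (V'.card : ℝ) := by
      have : 3 ≤ V'.card := by nlinarith [hV'lb, hE'1, hc1, hℓ]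
      exact_mod_cast by omega
    have hb2 : (1 : ℝ) < ((m * c + ℓ : ℕ) : ℝ) := by
      exact_mod_cast show 1 < m * c + ℓ by nlinarith
    rw [div_lt_div_iff₀ (by linarith) (by linarith)]
    have h1 : (E'.card : ℝ) < m := by exact_mod_cast hlt
    have h2 : (1 : ℝ) ≤ E'.card := by exact_mod_cast hE'1
    have h3 : ((E'.card : ℝ)) * c + ℓ ≤ V'.card := by
      exact_mod_cast (show E'.card * c + ℓ ≤ V'.card by linarith [hV'lb])
    have h4 : (2 : ℝ) ≤ ℓ := by exact_mod_cast hℓ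
    have h5 : (1 : ℝ) ≤ c := by exact_mod_cast hc1
    have h6 : (1 : ℝ) ≤ m := by exact_mod_cast hm
    push_cast
    nlinarith [mul_pos (show (0:ℝ) < (m:ℝ) - E'.card by linarith)
        (show (0:ℝ) < (ℓ:ℝ) - 1 by linarith),
      mul_nonneg (show (0:ℝ) ≤ (m:ℝ) by linarith)
        (show (0:ℝ) ≤ (V'.card:ℝ) - ((E'.card:ℝ) * c + ℓ) by linarith)]
  · -- E' = E and then V' = V : contradiction
    exfalso
    have hEcard' : E'.card = m := by omega
    have hSfull : S = Finset.range m := Finset.eq_of_subset_of_card_le hSsub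
      (by rw [hScard, hEcard', Finset.card_range])
    have hVsub : V ⊆ V' := by
      intro a ha
      rw [hV] at ha
      obtain ⟨j, hj, rfl⟩ := mem_image.1 ha
      rw [mem_range] at hj
      obtain ⟨r, hrm, hjr⟩ : ∃ r, r < m ∧ j ∈ Finset.Ico (r * c) (r * c + k) := by
        have hdm := Nat.div_add_mod j c
        have hmod := Nat.mod_lt j (show 0 < c by omega)
        rcases Nat.lt_or_ge (j / c) m with hq | hq
        · refine ⟨j / c, hq, ?_⟩
          simp only [mem_Ico]
          have : j / c * c = c * (j / c) := mul_comm _ _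
          omega
        · refine ⟨m - 1, by omega, ?_⟩
          have h1 : m * c ≤ (j / c) * c := hmulle hq
          have h2 : (m - 1) * c + c = m * c := by
            calc (m - 1) * c + c = (m - 1 + 1) * c := by ring
              _ = m * c := by congr 1; omega
          simp only [mem_Ico]
          have : j / c * c = c * (j / c) := mul_comm _ _
          omega
      have hfr : f r ∈ E' := by
        have : r ∈ S := hSfull ▸ Finset.mem_range.2 hrm
        exact (mem_filter.1 this).2
      exact hcover (f r) hfr (by rw [hfIco]; exact mem_image_of_mem v hjr)
    have hVeq : V' = V := Finset.Subset.antisymm hV' hVsub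
    have hEeq' : E' = E := Finset.eq_of_subset_of_card_le hE' (by omega)
    rcases hproper with hp | hp
    · exact hp hVeq
    · exact hp hEeq'
end

section
/- Fix integers 2 ≤ ℓ < k and m, and a constant c > ℓ/m. Let b := m(k-ℓ)+ℓ and suppose 2b divides n. If p < n^{-(k-ℓ)-c}, then with high probability the random k-graph H^{(k)}_{n,p} does not contain n/(2b) pairwise vertex-disjoint ℓ-paths each of length m. -/
open MeasureTheory
open scoped ENNReal

/-- The Bernoulli measure on `Bool` with success probability `p` (truncated at 1). -/
noncomputable def bern (p : ℝ≥0∞) : Measure Bool :=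
  (PMF.bernoulli (min p 1).toNNReal
    ((ENNReal.toNNReal_mono ENNReal.one_ne_top (min_le_right p 1)).trans_eq
      ENNReal.toNNReal_one)).toMeasure

/-- The binomial random `k`-graph `H^{(k)}_{n,p}`: each `k`-subset of `Fin n` is
an edge independently with probability `p`. An outcome is a boolean labelling of
the `k`-subsets of `Fin n`. -/
noncomputable def randomHypergraph (n k : ℕ) (p : ℝ≥0∞) :
    Measure ({s : Finset (Fin n) // s.card = k} → Bool) :=
  Measure.pi fun _ => bern p

/-- The edge set of the outcome `ω` of the random `k`-graph. -/
def edgeSet {n k : ℕ} (ω : {s : Finset (Fin n) // s.card = k} → Bool) :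
    Finset (Finset (Fin n)) :=
  (Finset.univ.filter (fun s : {s : Finset (Fin n) // s.card = k} => ω s = true)).image
    Subtype.val

/-! A family of `M` vertex-disjoint `ℓ`-paths of length `m` is determined by `M` vertex sequences
of length `b = m(k-ℓ)+ℓ`, so there are at most `n^{bM}` such families, and each one spans exactly
`Mm` distinct `k`-sets, all of which are edges with probability at most `p^{Mm}`. For
`p ≤ n^{-(k-ℓ)-c}` the union bound gives `n^{M(ℓ-cm)} ≤ n^{ℓ-cm}`, which tends to `0`
because `c > ℓ/m`. -/

open Filter Topology Finset

section EllPath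

variable {α : Type*} [DecidableEq α] {k ℓ m : ℕ}

lemma pathIndex_lt {r i : ℕ} (hℓk : ℓ ≤ k) (hr : r < m) (hi : i < k) :
    r * (k - ℓ) + i < m * (k - ℓ) + ℓ := by
  have : r * (k - ℓ) + (k - ℓ) ≤ m * (k - ℓ) := by
    simpa [add_mul] using Nat.mul_le_mul_right (k - ℓ) (Nat.succ_le_of_lt hr)
  omega

lemma pathEdges_congr {v v' : ℕ → α} (hℓk : ℓ ≤ k)
    (h : ∀ t < m * (k - ℓ) + ℓ, v t = v' t) : pathEdges k ℓ m v = pathEdges k ℓ m v' :=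
  image_congr fun _ hr => image_congr fun _ hi =>
    h _ (pathIndex_lt hℓk (mem_range.1 hr) (mem_range.1 hi))

namespace IsEllPath

variable {V : Finset α} {E : Finset (Finset α)} {s : Finset α}

lemma subset_of_mem (hP : IsEllPath k ℓ m V E) (hℓk : ℓ ≤ k) (hs : s ∈ E) : s ⊆ V := by
  obtain ⟨v, -, rfl, rfl⟩ := hP
  obtain ⟨r, hr, rfl⟩ := mem_image.1 hs
  exact image_subset_iff.2 fun i hi =>
    mem_image_of_mem v (mem_range.2 (pathIndex_lt hℓk (mem_range.1 hr) (mem_range.1 hi)))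

lemma card_of_mem (hP : IsEllPath k ℓ m V E) (hℓk : ℓ ≤ k) (hs : s ∈ E) : s.card = k := by
  obtain ⟨v, hinj, -, rfl⟩ := hP
  obtain ⟨r, hr, rfl⟩ := mem_image.1 hs
  rw [card_image_of_injOn, card_range]
  intro i hi i' hi' h
  have := hinj (mem_range.2 (pathIndex_lt hℓk (mem_range.1 hr) (mem_range.1 hi)))
    (mem_range.2 (pathIndex_lt hℓk (mem_range.1 hr) (mem_range.1 hi'))) h
  omega

lemma card_edges (hP : IsEllPath k ℓ m V E) (hℓk : ℓ < k) : E.card = m := by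
  obtain ⟨v, hinj, -, rfl⟩ := hP
  -- The last vertex of edge `r'` lies beyond every vertex of an earlier edge `r`.
  have hne : ∀ r r', r < r' → r' < m →
      (range k).image (fun i => v (r * (k - ℓ) + i)) ≠
        (range k).image (fun i => v (r' * (k - ℓ) + i)) := by
    intro r r' hrr' hr' heq
    obtain ⟨i, hi, hvi⟩ := mem_image.1 (heq ▸ mem_image_of_mem
      (fun i => v (r' * (k - ℓ) + i)) (mem_range.2 (Nat.sub_lt (by omega) one_pos)))
    have hidx := hinj (mem_range.2 (pathIndex_lt hℓk.le (hrr'.trans hr') (mem_range.1 hi)))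
      (mem_range.2 (pathIndex_lt hℓk.le hr' (Nat.sub_lt (by omega) one_pos))) hvi
    have : r * (k - ℓ) + (k - ℓ) ≤ r' * (k - ℓ) := by
      simpa [add_mul] using Nat.mul_le_mul_right (k - ℓ) (Nat.succ_le_of_lt hrr')
    simp only [mem_range] at hi
    omega
  rw [pathEdges, card_image_of_injOn, card_range]
  intro r hr r' hr' h
  simp only [coe_range, Set.mem_Iio] at hr hr'
  rcases lt_trichotomy r r' with hlt | heq | hgt
  · exact absurd h (hne r r' hlt hr')
  · exact heq
  · exact absurd h.symm (hne r' r hgt hr)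

end IsEllPath

lemma natCard_isEllPath_le [Fintype α] (hℓk : ℓ ≤ k) :
    Nat.card {P : Finset α × Finset (Finset α) // IsEllPath k ℓ m P.1 P.2} ≤
      Fintype.card α ^ (m * (k - ℓ) + ℓ) := by
  have hinj : Function.Injective fun P : {P : Finset α × Finset (Finset α) //
      IsEllPath k ℓ m P.1 P.2} => fun i : Fin (m * (k - ℓ) + ℓ) => Classical.choose P.2 i := by
    rintro ⟨P, hP⟩ ⟨Q, hQ⟩ h
    obtain ⟨-, hPV, hPE⟩ := Classical.choose_spec hP
    obtain ⟨-, hQV, hQE⟩ := Classical.choose_spec hQ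
    have hvw : ∀ t < m * (k - ℓ) + ℓ, Classical.choose hP t = Classical.choose hQ t :=
      fun t ht => congrFun h ⟨t, ht⟩
    refine Subtype.ext (Prod.ext ?_ ?_)
    · rw [hPV, hQV]
      exact image_congr fun t ht => hvw t (mem_range.1 ht)
    · rw [hPE, hQE]
      exact pathEdges_congr hℓk hvw
  simpa using Nat.card_le_card_of_injective _ hinj

lemma card_biUnion_edges {ι : Type*} [Fintype ι] (hℓk : ℓ < k)
    {P : ι → Finset α × Finset (Finset α)} (hP : ∀ j, IsEllPath k ℓ m (P j).1 (P j).2)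
    (hdisj : ∀ j j', j ≠ j' → Disjoint (P j).1 (P j').1) :
    (univ.biUnion fun j => (P j).2).card = Fintype.card ι * m := by
  rw [card_biUnion, sum_congr rfl fun j _ => (hP j).card_edges hℓk, sum_const, card_univ,
    smul_eq_mul]
  intro j _ j' _ hjj'
  refine disjoint_left.2 fun s hs hs' => ?_
  obtain ⟨x, hx⟩ : s.Nonempty := card_pos.1 (((hP j).card_of_mem hℓk.le hs).symm ▸ by omega)
  exact disjoint_left.1 (hdisj j j' hjj') ((hP j).subset_of_mem hℓk.le hs hx)
    ((hP j').subset_of_mem hℓk.le hs' hx)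

end EllPath

instance (p : ℝ≥0∞) : IsProbabilityMeasure (bern p) :=
  PMF.toMeasure.isProbabilityMeasure _

lemma bern_singleton_true (p : ℝ≥0∞) : bern p {true} = min p 1 := by
  rw [bern, PMF.toMeasure_apply_singleton _ _ (measurableSet_singleton _)]
  exact ENNReal.coe_toNNReal (ne_top_of_le_ne_top ENNReal.one_ne_top (min_le_right p 1))

lemma measure_pi_bern_forall_true {ι : Type*} [Fintype ι] (p : ℝ≥0∞) (T : Finset ι) :
    Measure.pi (fun _ : ι => bern p) {ω | ∀ i ∈ T, ω i = true} = min p 1 ^ T.card := by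
  have := Measure.pi_pi_finset (fun _ : ι => bern p) (fun _ => {true}) T
  rwa [prod_const, bern_singleton_true] at this

lemma mem_edgeSet {n k : ℕ} {ω : {s : Finset (Fin n) // s.card = k} → Bool}
    {s : Finset (Fin n)} :
    s ∈ edgeSet ω ↔ ∃ h : s.card = k, ω ⟨s, h⟩ = true := by
  simp [edgeSet]

lemma randomHypergraph_subset_edgeSet {n k : ℕ} (p : ℝ≥0∞) {S : Finset (Finset (Fin n))}
    (hS : ∀ s ∈ S, s.card = k) :
    randomHypergraph n k p {ω | S ⊆ edgeSet ω} = min p 1 ^ S.card := by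
  have hset : {ω | S ⊆ edgeSet ω} =
      {ω | ∀ s ∈ S.subtype fun s : Finset (Fin n) => s.card = k, ω s = true} := by
    ext ω
    simp only [Set.mem_ofPred_eq, subset_iff, mem_edgeSet, mem_subtype, Subtype.forall]
    exact ⟨fun h s _ hsS => (h hsS).2, fun h s hsS => ⟨hS s hsS, h s _ hsS⟩⟩
  rw [hset, randomHypergraph, measure_pi_bern_forall_true, card_subtype,
    filter_true_of_mem hS]

def HasDisjointEllPaths {α : Type*} [DecidableEq α] (k ℓ m M : ℕ) (E : Finset (Finset α)) :
    Prop :=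
  ∃ P : Fin M → Finset α × Finset (Finset α),
    (∀ j, IsEllPath k ℓ m (P j).1 (P j).2) ∧ (∀ j, (P j).2 ⊆ E) ∧
      ∀ j j', j ≠ j' → Disjoint (P j).1 (P j').1

lemma randomHypergraph_hasDisjointEllPaths_le {n k ℓ m : ℕ} (hℓk : ℓ < k) (M : ℕ)
    (p : ℝ≥0∞) :
    randomHypergraph n k p {ω | HasDisjointEllPaths k ℓ m M (edgeSet ω)} ≤
      ((n : ℝ≥0∞) ^ (m * (k - ℓ) + ℓ) * p ^ m) ^ M := by
  classical
  set paths := univ.filter fun P : Finset (Fin n) × Finset (Finset (Fin n)) =>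
    IsEllPath k ℓ m P.1 P.2
  set families := univ.filter fun P : Fin M → Finset (Fin n) × Finset (Finset (Fin n)) =>
    (∀ j, IsEllPath k ℓ m (P j).1 (P j).2) ∧ ∀ j j', j ≠ j' → Disjoint (P j).1 (P j').1
  have hcover : {ω | HasDisjointEllPaths k ℓ m M (edgeSet (k := k) ω)} ⊆
      ⋃ P ∈ families, {ω | (univ.biUnion fun j => (P j).2) ⊆ edgeSet ω} := by
    rintro ω ⟨P, hpath, hedge, hdisj⟩
    exact Set.mem_biUnion (mem_filter.2 ⟨mem_univ _, hpath, hdisj⟩)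
      (biUnion_subset.2 fun j _ => hedge j)
  have hfamilies : families.card ≤ (n ^ (m * (k - ℓ) + ℓ)) ^ M := by
    have hpaths : paths.card ≤ n ^ (m * (k - ℓ) + ℓ) := by
      simpa [paths, Nat.card_eq_fintype_card, Fintype.card_subtype] using
        natCard_isEllPath_le (α := Fin n) (m := m) hℓk.le
    calc families.card ≤ (Fintype.piFinset fun _ : Fin M => paths).card :=
          card_le_card fun P hP => Fintype.mem_piFinset.2 fun j => by
            simpa [paths] using ((mem_filter.1 hP).2.1 j)
      _ ≤ _ := by rw [Fintype.card_piFinset_const]; gcongr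
  have hevent : ∀ P ∈ families,
      randomHypergraph n k p {ω | (univ.biUnion fun j => (P j).2) ⊆ edgeSet ω} ≤
        p ^ (M * m) := by
    intro P hP
    obtain ⟨hpath, hdisj⟩ := (mem_filter.1 hP).2
    rw [randomHypergraph_subset_edgeSet p, card_biUnion_edges hℓk hpath hdisj, Fintype.card_fin]
    · exact pow_le_pow_left₀ zero_le (min_le_left _ _) _
    · simp only [mem_biUnion, mem_univ, true_and, forall_exists_index]
      exact fun s j hs => (hpath j).card_of_mem hℓk.le hs
  calc randomHypergraph n k p {ω | HasDisjointEllPaths k ℓ m M (edgeSet ω)}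
      ≤ ∑ P ∈ families,
          randomHypergraph n k p {ω | (univ.biUnion fun j => (P j).2) ⊆ edgeSet ω} :=
        (measure_mono hcover).trans (measure_biUnion_finset_le _ _)
    _ ≤ families.card * p ^ (M * m) := by
        rw [← nsmul_eq_mul]; exact sum_le_card_nsmul _ _ _ hevent
    _ ≤ ((n ^ (m * (k - ℓ) + ℓ)) ^ M : ℕ) * p ^ (M * m) := by gcongr
    _ = _ := by push_cast; ring

lemma pow_mul_pow_le_rpow_add {x q : ℝ≥0∞} {e : ℝ} (hx₀ : x ≠ 0) (hx : x ≠ ⊤)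
    (hq : q ≤ x ^ e) (b m : ℕ) : x ^ b * q ^ m ≤ x ^ ((b : ℝ) + e * m) := by
  rw [ENNReal.rpow_add _ _ hx₀ hx, ENNReal.rpow_natCast, ENNReal.rpow_mul, ENNReal.rpow_natCast]
  gcongr

lemma tendsto_natCast_rpow_of_neg {y : ℝ} (hy : y < 0) :
    Tendsto (fun n : ℕ => (n : ℝ≥0∞) ^ y) atTop (𝓝 0) := by
  have := (ENNReal.continuous_rpow_const (y := y)).tendsto ⊤ |>.comp ENNReal.tendsto_nat_nhds_top
  rwa [ENNReal.top_rpow_of_neg hy] at this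

theorem no_many_disjoint_paths_general (k ℓ m : ℕ) (hℓk : ℓ < k)
    (hm : 1 ≤ m) (c : ℝ) (hc : c > (ℓ : ℝ) / m)
    (p : ℕ → ℝ) (hp : ∀ n : ℕ, 1 ≤ n → 0 ≤ p n ∧
      p n < (n : ℝ) ^ (-((k : ℝ) - (ℓ : ℝ)) - c)) :
    let b : ℕ := m * (k - ℓ) + ℓ
    ∀ ε : ℝ≥0∞, 0 < ε → ∃ N : ℕ, ∀ n ≥ N, 2 * b ∣ n →
      randomHypergraph n k (ENNReal.ofReal (p n))
        {ω | ∃ P : Fin (n / (2 * b)) → Finset (Fin n) × Finset (Finset (Fin n)),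
          (∀ j, IsEllPath k ℓ m (P j).1 (P j).2) ∧
          (∀ j, (P j).2 ⊆ edgeSet ω) ∧
          (∀ j j', j ≠ j' → Disjoint (P j).1 (P j').1)} ≤ ε := by
  intro b ε hε
  have hδ : (ℓ : ℝ) - c * m < 0 := by
    linarith [(div_lt_iff₀ (by positivity : (0 : ℝ) < m)).1 hc]
  obtain ⟨N, hN⟩ := eventually_atTop.1 ((tendsto_natCast_rpow_of_neg hδ).eventually_lt_const hε)
  refine ⟨max N 1, fun n hn hdvd => ?_⟩
  have hn₀ : n ≠ 0 := by omega
  have hb : 0 < b := by have := Nat.mul_pos hm (Nat.sub_pos_of_lt hℓk); omega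
  have hM : n / (2 * b) ≠ 0 :=
    (Nat.div_pos (Nat.le_of_dvd (by omega) hdvd) (by omega)).ne'
  have hpn : ENNReal.ofReal (p n) ≤ (n : ℝ≥0∞) ^ (-((k : ℝ) - ℓ) - c) := by
    rw [← ENNReal.ofReal_natCast, ENNReal.ofReal_rpow_of_pos (by positivity)]
    exact ENNReal.ofReal_le_ofReal (hp n (by omega)).2.le
  calc _ ≤ ((n : ℝ≥0∞) ^ b * ENNReal.ofReal (p n) ^ m) ^ (n / (2 * b)) :=
        randomHypergraph_hasDisjointEllPaths_le hℓk _ _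
    _ ≤ ((n : ℝ≥0∞) ^ ((ℓ : ℝ) - c * m)) ^ (n / (2 * b)) := by
        gcongr
        convert pow_mul_pow_le_rpow_add (by simpa) (ENNReal.natCast_ne_top n) hpn b m using 2
        push_cast [b, Nat.cast_sub hℓk.le]
        ring
    _ ≤ (n : ℝ≥0∞) ^ ((ℓ : ℝ) - c * m) :=
        pow_le_of_le_one zero_le (ENNReal.rpow_le_one_of_one_le_of_neg
          (by exact_mod_cast Nat.one_le_iff_ne_zero.2 hn₀) hδ) hM
    _ ≤ ε := (hN n (le_of_max_le_left hn)).le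

/-- Fix `2 ≤ ℓ < k`, `m`, and a constant `c > ℓ/m`; let `b := m(k-ℓ)+ℓ`. If
`p < n^{-(k-ℓ)-c}`, then with high probability (as `n → ∞` through multiples of
`2b`) the random `k`-graph `H^{(k)}_{n,p}` does not contain `n/(2b)` pairwise
vertex-disjoint `ℓ`-paths each of length `m`. -/
theorem no_many_disjoint_paths (k ℓ m : ℕ) (hℓ : 2 ≤ ℓ) (hℓk : ℓ < k)
    (hm : 1 ≤ m) (c : ℝ) (hc : c > (ℓ : ℝ) / m)
    (p : ℕ → ℝ) (hp : ∀ n : ℕ, 1 ≤ n → 0 ≤ p n ∧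
      p n < (n : ℝ) ^ (-((k : ℝ) - (ℓ : ℝ)) - c)) :
    let b : ℕ := m * (k - ℓ) + ℓ
    ∀ ε : ℝ≥0∞, 0 < ε → ∃ N : ℕ, ∀ n ≥ N, 2 * b ∣ n →
      randomHypergraph n k (ENNReal.ofReal (p n))
        {ω | ∃ P : Fin (n / (2 * b)) → Finset (Fin n) × Finset (Finset (Fin n)),
          (∀ j, IsEllPath k ℓ m (P j).1 (P j).2) ∧
          (∀ j, (P j).2 ⊆ edgeSet ω) ∧
          (∀ j j', j ≠ j' → Disjoint (P j).1 (P j').1)} ≤ ε :=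
  no_many_disjoint_paths_general k ℓ m hℓk hm c hc p hp
end

section
/- Let 2 ≤ ℓ < k, 0 < α < 1/(12k²), m := ⌊1/(4αk)⌋, and b := m(k-ℓ)+ℓ. Let C be a Hamilton ℓ-cycle on n vertices and let A be a set of at most αn vertices. Then C contains at least n/(2b) pairwise vertex-disjoint sub-ℓ-paths of length m, none of which contains a vertex of A. -/
/-!
Cut the cyclic order into `⌊n/q⌋` disjoint blocks of `q = (k-ℓ)(m+k)` consecutive vertices,
each starting at a multiple of `k-ℓ`; the first `b ≤ q` vertices of a block span a sub-`ℓ`-path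
of length `m`. As the blocks are disjoint, at most `|A| ≤ αn ≤ n/(4mk)` of them meet `A`, and
`m ≥ 3k` gives `1/(2b) + 1/(4mk) ≤ 1/q`, so at least `n/(2b)` blocks avoid `A`.
-/

open Finset

theorem Nat.div_add_div_le_div_of_mul_add_le {n q c e : ℕ} (hq : 0 < q) (hc : 0 < c)
    (he : 0 < e) (h : q * (c + e) ≤ c * e) : n / c + n / e ≤ n / q := by
  rw [Nat.le_div_iff_mul_le hq]
  refine Nat.le_of_mul_le_mul_right ?_ (Nat.mul_pos hc he)
  calc (n / c + n / e) * q * (c * e) = n / c * c * (q * e) + n / e * e * (q * c) := by ring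
    _ ≤ n * (q * e) + n * (q * c) := by gcongr <;> exact Nat.div_mul_le_self _ _
    _ = n * (q * (c + e)) := by ring
    _ ≤ n * (c * e) := by gcongr

theorem three_mul_le_floor_inv {k : ℕ} {α : ℝ} (hα0 : 0 < α) (hα1 : α < 1 / (12 * (k : ℝ) ^ 2)) :
    3 * k ≤ ⌊1 / (4 * α * (k : ℝ))⌋₊ := by
  rcases Nat.eq_zero_or_pos k with rfl | hk
  · simp
  apply Nat.le_floor
  rw [le_div_iff₀ (by positivity)]
  rw [lt_div_iff₀ (by positivity)] at hα1
  push_cast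
  nlinarith

theorem mul_four_floor_inv_mul_le {a n k : ℕ} {α : ℝ} (hα0 : 0 < α) (ha : (a : ℝ) ≤ α * n) :
    a * (4 * ⌊1 / (4 * α * (k : ℝ))⌋₊ * k) ≤ n := by
  rcases Nat.eq_zero_or_pos k with rfl | hk
  · simp
  have hm : α * (4 * ⌊1 / (4 * α * (k : ℝ))⌋₊ * k) ≤ 1 := by
    have := Nat.floor_le (a := 1 / (4 * α * (k : ℝ))) (by positivity)
    rw [le_div_iff₀ (by positivity)] at this
    linarith
  have : (a : ℝ) * (4 * ⌊1 / (4 * α * (k : ℝ))⌋₊ * k) ≤ n := by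
    calc (a : ℝ) * (4 * ⌊1 / (4 * α * (k : ℝ))⌋₊ * k)
        ≤ α * n * (4 * ⌊1 / (4 * α * (k : ℝ))⌋₊ * k) := by gcongr
      _ = n * (α * (4 * ⌊1 / (4 * α * (k : ℝ))⌋₊ * k)) := by ring
      _ ≤ n := mul_le_of_le_one_right (by positivity) hm
  exact_mod_cast this

theorem div_two_mul_add_div_le_div {n k ℓ m : ℕ} (hℓk : ℓ < k) (hm : 3 * k ≤ m) :
    n / (2 * (m * (k - ℓ) + ℓ)) + n / (4 * m * k) ≤ n / ((k - ℓ) * (m + k)) := by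
  obtain ⟨d, rfl⟩ := Nat.exists_eq_add_of_le hℓk.le
  rw [Nat.add_sub_cancel_left] at *
  have hd : 0 < d := by omega
  obtain ⟨t, rfl⟩ := Nat.exists_eq_add_of_le hm
  apply Nat.div_add_div_le_div_of_mul_add_le (by positivity) (by positivity) (by positivity)
  -- with `m = 3k + t`, the gap is a polynomial in `ℓ, d, t` with nonnegative coefficients
  have key : 2 * ((3 * (ℓ + d) + t) * d + ℓ) * (4 * (3 * (ℓ + d) + t) * (ℓ + d)) =
      d * (3 * (ℓ + d) + t + (ℓ + d)) *
        (2 * ((3 * (ℓ + d) + t) * d + ℓ) + 4 * (3 * (ℓ + d) + t) * (ℓ + d)) +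
      (24 * ℓ ^ 3 + 40 * d * ℓ ^ 2 + 24 * d * ℓ ^ 3 + 16 * d ^ 2 * ℓ + 48 * d ^ 2 * ℓ ^ 2
        + 24 * d ^ 3 * ℓ + t * (8 * ℓ ^ 2 + 6 * d * ℓ + 20 * d * ℓ ^ 2 + 26 * d ^ 2 * ℓ
        + 6 * d ^ 3) + t ^ 2 * (4 * d * ℓ + 2 * d ^ 2)) := by
    ring
  omega

section Windows

variable {β : Type*} [DecidableEq β] {v : ℕ → β} {n : ℕ}

def cycleEdges (k ℓ n : ℕ) (v : ℕ → β) : Finset (Finset β) :=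
  (range (n / (k - ℓ))).image fun j => (range k).image fun i => v ((j * (k - ℓ) + i) % n)

theorem isEllPath_shift {k ℓ m s : ℕ} (hinj : Set.InjOn v (range n))
    (hs : s + (m * (k - ℓ) + ℓ) ≤ n) :
    IsEllPath k ℓ m ((range (m * (k - ℓ) + ℓ)).image fun t => v (s + t))
      (pathEdges k ℓ m fun t => v (s + t)) := by
  refine ⟨fun t => v (s + t), fun t ht t' ht' h => ?_, rfl, rfl⟩
  simp only [coe_range, Set.mem_Iio] at ht ht'
  have := hinj (mem_range.2 (by omega)) (mem_range.2 (by omega)) h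
  omega

theorem pathEdges_shift_subset_cycleEdges {k ℓ m s : ℕ} (hℓk : ℓ < k) (hdvd : k - ℓ ∣ s)
    (hs : s + (m * (k - ℓ) + ℓ) ≤ n) :
    pathEdges k ℓ m (fun t => v (s + t)) ⊆ cycleEdges k ℓ n v := by
  obtain ⟨j₀, rfl⟩ := hdvd
  intro E hE
  rw [cycleEdges, mem_image]
  simp only [pathEdges, mem_image, mem_range] at hE
  obtain ⟨r, hr, rfl⟩ := hE
  have hk : k = k - ℓ + ℓ := by omega
  generalize k - ℓ = d at *
  have hrm : (j₀ + r + 1) * d ≤ d * j₀ + m * d := by nlinarith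
  refine ⟨j₀ + r, ?_, image_congr fun i hi => ?_⟩
  · exact mem_range.2 (Nat.lt_of_succ_le ((Nat.le_div_iff_mul_le (by omega)).2
    (show (j₀ + r + 1) * d ≤ n by omega)))
  · simp only [coe_range, Set.mem_Iio] at hi
    rw [Nat.mod_eq_of_lt (by nlinarith)]
    ring_nf

theorem pairwiseDisjoint_shift_blocks {b q : ℕ} (hinj : Set.InjOn v (range n)) (hbq : b ≤ q) :
    (Set.Iio (n / q)).PairwiseDisjoint fun i => (range b).image fun t => v (i * q + t) := by
  intro i hi i' hi' hne
  simp only [Set.mem_Iio] at hi hi'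
  have hiq := Nat.mul_le_of_le_div q _ _ hi
  have hiq' := Nat.mul_le_of_le_div q _ _ hi'
  refine disjoint_left.2 fun x hx hx' => hne ?_
  simp only [mem_image, mem_range] at hx hx'
  obtain ⟨t, ht, rfl⟩ := hx
  obtain ⟨t', ht', h⟩ := hx'
  have heq := hinj (mem_range.2 (by nlinarith)) (mem_range.2 (by nlinarith)) h.symm
  have hq : 0 < q := by omega
  calc i = (t + i * q) / q := by
        rw [Nat.add_mul_div_right _ _ hq, Nat.div_eq_of_lt (by omega), zero_add]
    _ = (t' + i' * q) / q := by rw [add_comm t, add_comm t', heq]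
    _ = i' := by rw [Nat.add_mul_div_right _ _ hq, Nat.div_eq_of_lt (by omega), zero_add]

end Windows

theorem exists_injective_disjoint_of_pairwiseDisjoint {β : Type*} [DecidableEq β]
    {V : ℕ → Finset β} {r N : ℕ} {A : Finset β} (hV : (Set.Iio r).PairwiseDisjoint V)
    (hN : N + #A ≤ r) :
    ∃ f : Fin N → ℕ, Function.Injective f ∧ ∀ j, f j ∈ Set.Iio r ∧ Disjoint (V (f j)) A := by
  set S := (range r).filter fun i => Disjoint (V i) A
  have hbad : #((range r).filter fun i => ¬Disjoint (V i) A) ≤ #A := by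
    refine card_le_card_of_forall_subsingleton (fun i x => x ∈ V i) (fun i hi => ?_) ?_
    · obtain ⟨x, hxV, hxA⟩ := not_disjoint_iff.1 (mem_filter.1 hi).2
      exact ⟨x, hxA, hxV⟩
    · intro x _ i ⟨hi, hxi⟩ i' ⟨hi', hxi'⟩
      simp only [mem_filter, mem_range] at hi hi'
      by_contra hne
      exact disjoint_left.1 (hV hi.1 hi'.1 hne) hxi hxi'
  have hsplit : #S + #((range r).filter fun i => ¬Disjoint (V i) A) = r := by
    rw [card_filter_add_card_filter_not, card_range]
  have hS : N ≤ #S := by omega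
  refine ⟨fun j => S.equivFin.symm (Fin.castLE hS j), fun j j' h => ?_, fun j => ?_⟩
  · exact Fin.castLE_injective hS (S.equivFin.symm.injective (Subtype.ext h))
  · have := (S.equivFin.symm (Fin.castLE hS j)).2
    simp only [S, mem_filter, mem_range] at this
    exact this

theorem hamCycle_disjoint_subpaths_general (k ℓ n : ℕ) (hℓk : ℓ < k)
    (α : ℝ) (hα0 : 0 < α) (hα1 : α < 1 / (12 * (k : ℝ) ^ 2))
    (v : ℕ → Fin n) (hinj : Set.InjOn v (Finset.range n))
    (EC : Finset (Finset (Fin n)))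
    (hEC : EC = (Finset.range (n / (k - ℓ))).image
      (fun j => (Finset.range k).image (fun i => v ((j * (k - ℓ) + i) % n))))
    (A : Finset (Fin n)) (hA : (A.card : ℝ) ≤ α * n) :
    let m : ℕ := ⌊1 / (4 * α * (k : ℝ))⌋₊
    let b : ℕ := m * (k - ℓ) + ℓ
    ∃ P : Fin (n / (2 * b)) → Finset (Fin n) × Finset (Finset (Fin n)),
      (∀ j, IsEllPath k ℓ m (P j).1 (P j).2) ∧
      (∀ j, (P j).2 ⊆ EC) ∧
      (∀ j j', j ≠ j' → Disjoint (P j).1 (P j').1) ∧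
      (∀ j, Disjoint (P j).1 A) := by
  intro m b
  have hm : 3 * k ≤ m := three_mul_le_floor_inv hα0 hα1
  set q := (k - ℓ) * (m + k)
  have hbq : b ≤ q := by
    have : ℓ ≤ (k - ℓ) * k := le_mul_of_one_le_of_le (by omega) hℓk.le
    simp only [b, q, mul_add, mul_comm m]
    omega
  have hmk : 0 < 4 * m * k := Nat.mul_pos (by omega) (by omega)
  have hAm : #A ≤ n / (4 * m * k) :=
    (Nat.le_div_iff_mul_le hmk).2 (mul_four_floor_inv_mul_le hα0 hA)
  obtain ⟨f, hf_inj, hf⟩ := exists_injective_disjoint_of_pairwiseDisjoint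
    (pairwiseDisjoint_shift_blocks (b := b) hinj hbq)
    ((Nat.add_le_add_left hAm _).trans (div_two_mul_add_div_le_div hℓk hm))
  have hfit : ∀ j, f j * q + b ≤ n := fun j =>
    (Nat.add_le_add_left hbq _).trans
      (by simpa [add_mul] using Nat.mul_le_of_le_div q _ _ (hf j).1)
  refine ⟨fun j => ((range b).image fun t => v (f j * q + t),
      pathEdges k ℓ m fun t => v (f j * q + t)),
    fun j => isEllPath_shift hinj (hfit j), fun j => ?_,
    fun j j' hne => pairwiseDisjoint_shift_blocks hinj hbq (hf j).1 (hf j').1 (hf_inj.ne hne),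
    fun j => (hf j).2⟩
  exact hEC ▸ pathEdges_shift_subset_cycleEdges hℓk ((dvd_mul_right _ _).mul_left _) (hfit j)

/-- Let `2 ≤ ℓ < k`, `0 < α < 1/(12k²)`, `m := ⌊1/(4αk)⌋` and `b := m(k-ℓ)+ℓ`.
Let `C` be a Hamilton `ℓ`-cycle on `n` vertices (given by a cyclic ordering `v`
of `Fin n`, with edge set `EC` consisting of the `n/(k-ℓ)` cyclic windows of `k`
consecutive vertices starting at the multiples of `k-ℓ`), and let `A` be a set of
at most `αn` vertices. Then `C` contains at least `n/(2b)` pairwise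
vertex-disjoint sub-`ℓ`-paths of length `m`, none containing a vertex of `A`. -/
theorem hamCycle_disjoint_subpaths (k ℓ n : ℕ) (hℓ : 2 ≤ ℓ) (hℓk : ℓ < k)
    (hdvd : (k - ℓ) ∣ n)
    (α : ℝ) (hα0 : 0 < α) (hα1 : α < 1 / (12 * (k : ℝ) ^ 2))
    (v : ℕ → Fin n) (hinj : Set.InjOn v (Finset.range n))
    (hspan : (Finset.range n).image v = Finset.univ)
    (EC : Finset (Finset (Fin n)))
    (hEC : EC = (Finset.range (n / (k - ℓ))).image
      (fun j => (Finset.range k).image (fun i => v ((j * (k - ℓ) + i) % n))))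
    (A : Finset (Fin n)) (hA : (A.card : ℝ) ≤ α * n) :
    let m : ℕ := ⌊1 / (4 * α * (k : ℝ))⌋₊
    let b : ℕ := m * (k - ℓ) + ℓ
    ∃ P : Fin (n / (2 * b)) → Finset (Fin n) × Finset (Finset (Fin n)),
      (∀ j, IsEllPath k ℓ m (P j).1 (P j).2) ∧
      (∀ j, (P j).2 ⊆ EC) ∧
      (∀ j j', j ≠ j' → Disjoint (P j).1 (P j').1) ∧
      (∀ j, Disjoint (P j).1 A) :=
  hamCycle_disjoint_subpaths_general k ℓ n hℓk α hα0 hα1 v hinj EC hEC A hA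
end
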